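/- arXiv:1503.04563 — 3 statements merged into one kernel-verified Lean document; each statement's English description precedes it below -/
import Mathlib

section
/- Let p be a prime and k ≥ 1. The 𝔽_p-linear map Φ : ({λ : Fin k → ZMod p // λ ≠ 0} → H) → (((Fin k → ℕ) × Fin (p^k − 1)) →₀ ZMod p), defined by Φ(x)(I, ν) = Σ_{λ ≠ 0} (D_{ℓ_λ^{(ν : ℕ)+1}} (x λ)) I, is surjective. -/
/-
A linear map of vector spaces is onto iff its transpose is injective, so let `φ` be a functional
on `H ⊗ M_k` vanishing on the image. Functionals on `H` are power series in `t₁, …, t_k`, and the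
transpose of the contraction `D_g` is multiplication by `g`. Writing `q_ν` for the power series of
the `ν`-th component of `φ`, the vanishing of `φ ∘ Θ_λ` says that
`G(X) = ∑_ν q_ν X^(ν+1) ∈ 𝔽_p⟦t⟧[X]` has the root `ℓ_λ` for every `λ ≠ 0`, and `ℓ_0 = 0` is a root
trivially. These `p^k` roots are distinct while `deg G < p^k`, and `𝔽_p⟦t⟧` is a domain, so `G = 0`
(Vandermonde), i.e. `φ = 0`.
-/

/-- The linear form `λ₁ t₁ + ⋯ + λ_k t_k ∈ 𝔽_p[t₁,…,t_k]` attached to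
`λ : Fin k → ZMod p`. -/
noncomputable def linForm (p k : ℕ) (lam : Fin k → ZMod p) :
    MvPolynomial (Fin k) (ZMod p) :=
  ∑ i : Fin k, lam i • MvPolynomial.X i

/-- The contraction operator `D_g` on the free `𝔽_p`-module `H = ((Fin k → ℕ) →₀ 𝔽_p)`,
dual to multiplication by `g`: `(D_g x) I = ∑_{J ∈ g.support} (coeff J g) * x (I + J)`. -/
noncomputable def contract (p k : ℕ) (g : MvPolynomial (Fin k) (ZMod p))
    (x : (Fin k → ℕ) →₀ ZMod p) : (Fin k → ℕ) →₀ ZMod p :=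
  Finsupp.onFinset (g.support.biUnion fun J => x.support.image fun K => K - J)
    (fun I => ∑ J ∈ g.support, MvPolynomial.coeff J g * x (I + J))
    (fun I hI => by
      by_contra hmem
      apply hI
      apply Finset.sum_eq_zero
      intro J hJ
      rcases eq_or_ne (x (I + J)) 0 with h | h
      · rw [h, mul_zero]
      · exact absurd
          (Finset.mem_biUnion.mpr ⟨J, hJ, Finset.mem_image.mpr
            ⟨I + J, Finsupp.mem_support_iff.mpr h, by funext t; simp⟩⟩)
          hmem)

open MvPolynomial Finset

theorem eq_zero_of_forall_sum_mul_pow_succ_eq_zero {R ι : Type*} [CommRing R] [IsDomain R]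
    [Fintype ι] {f : ι → R} (hf : Function.Injective f) {N : ℕ} (hN : N < Fintype.card ι)
    {q : Fin N → R} (h : ∀ i, ∑ ν, q ν * f i ^ ((ν : ℕ) + 1) = 0) : q = 0 := by
  let e : Fin (N + 1) ↪ ι := (Fin.castLEEmb hN).trans (Fintype.equivFin ι).symm.toEmbedding
  have hcons : (Fin.cons 0 q : Fin (N + 1) → R) = 0 :=
    Matrix.eq_zero_of_forall_index_sum_mul_pow_eq_zero (hf.comp e.injective) fun j => by
      simpa [Fin.sum_univ_succ] using h (e j)
  funext ν
  simpa using congrFun hcons ν.succ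

variable {p k : ℕ}

theorem contract_apply (g : MvPolynomial (Fin k) (ZMod p)) (x : (Fin k → ℕ) →₀ ZMod p)
    (I : Fin k → ℕ) : contract p k g x I = ∑ J ∈ g.support, coeff J g * x (I + J) := rfl

variable (p k) in
noncomputable def contractₗ (g : MvPolynomial (Fin k) (ZMod p)) :
    ((Fin k → ℕ) →₀ ZMod p) →ₗ[ZMod p] (Fin k → ℕ) →₀ ZMod p where
  toFun := contract p k g
  map_add' x y := by ext I; simp [contract_apply, mul_add, sum_add_distrib]
  map_smul' c x := by ext I; simp [contract_apply, mul_sum, mul_left_comm]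

theorem contract_single_one (g : MvPolynomial (Fin k) (ZMod p)) (n : Fin k →₀ ℕ) :
    contract p k g (Finsupp.single (⇑n) 1) =
      ∑ ab ∈ antidiagonal n, Finsupp.single (⇑ab.1) (coeff ab.2 g) := by
  ext I
  obtain ⟨I, rfl⟩ : ∃ I' : Fin k →₀ ℕ, ⇑I' = I := ⟨Finsupp.equivFunOnFinite.symm I, rfl⟩
  simp only [contract_apply, Finsupp.finsetSum_apply, ← Finsupp.coe_add, Finsupp.single_apply,
    DFunLike.coe_fn_eq, mul_ite, mul_one, mul_zero]
  by_cases hI : I ≤ n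
  · rw [sum_eq_single (n - I), sum_eq_single (I, n - I)]
    · simp [add_tsub_cancel_of_le hI]
    · rintro ⟨a, b⟩ hab hne
      rw [HasAntidiagonal.mem_antidiagonal] at hab
      subst hab
      rw [if_neg]
      rintro rfl
      simp at hne
    · simp [add_tsub_cancel_of_le hI]
    · rintro J - hJ
      rw [if_neg]
      rintro rfl
      simp at hJ
    · intro h
      simp [notMem_support_iff.mp h]
  · rw [sum_eq_zero, sum_eq_zero]
    · rintro ⟨a, b⟩ hab
      rw [HasAntidiagonal.mem_antidiagonal] at hab
      rw [if_neg]
      rintro rfl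
      exact hI (hab ▸ le_self_add)
    · intro J _
      rw [if_neg]
      rintro rfl
      exact hI le_self_add

variable (p k) in
noncomputable def dualSeries :
    Module.Dual (ZMod p) ((Fin k → ℕ) →₀ ZMod p) →ₗ[ZMod p] MvPowerSeries (Fin k) (ZMod p) where
  toFun ψ n := ψ (Finsupp.single (⇑n) 1)
  map_add' _ _ := rfl
  map_smul' _ _ := rfl

theorem coeff_dualSeries (ψ : Module.Dual (ZMod p) ((Fin k → ℕ) →₀ ZMod p)) (n : Fin k →₀ ℕ) :
    MvPowerSeries.coeff n (dualSeries p k ψ) = ψ (Finsupp.single (⇑n) 1) := rfl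

theorem dualSeries_injective : Function.Injective (dualSeries p k) := by
  refine (injective_iff_map_eq_zero _).mpr fun ψ hψ => Finsupp.lhom_ext fun I a => ?_
  have h := congrArg (MvPowerSeries.coeff (Finsupp.equivFunOnFinite.symm I)) hψ
  rw [coeff_dualSeries, Finsupp.coe_equivFunOnFinite_symm, map_zero] at h
  rw [← Finsupp.smul_single_one, map_smul, h, smul_zero, LinearMap.zero_apply]

theorem dualSeries_comp_contractₗ (ψ : Module.Dual (ZMod p) ((Fin k → ℕ) →₀ ZMod p))
    (g : MvPolynomial (Fin k) (ZMod p)) :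
    dualSeries p k (ψ ∘ₗ contractₗ p k g) = dualSeries p k ψ * g := by
  ext n
  rw [MvPowerSeries.coeff_mul, coeff_dualSeries, LinearMap.comp_apply]
  simp only [contractₗ, LinearMap.coe_mk, AddHom.coe_mk, contract_single_one, map_sum]
  refine sum_congr rfl fun ab _ => ?_
  rw [← Finsupp.smul_single_one, map_smul, coeff_dualSeries, coeff_coe, smul_eq_mul, mul_comm]

theorem coeff_single_linForm (lam : Fin k → ZMod p) (i : Fin k) :
    coeff (Finsupp.single i 1) (linForm p k lam) = lam i := by
  classical
  simp [linForm, coeff_sum, coeff_X, Finsupp.single_left_inj]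

theorem linForm_injective : Function.Injective (linForm p k) := fun a b h =>
  funext fun i => by simpa [coeff_single_linForm] using congrArg (coeff (Finsupp.single i 1)) h

variable (p k) in
/-- The paper's `Θ_λ`. -/
noncomputable def theta (lam : Fin k → ZMod p) :
    ((Fin k → ℕ) →₀ ZMod p) →ₗ[ZMod p] ((Fin k → ℕ) × Fin (p ^ k - 1)) →₀ ZMod p :=
  ∑ ν : Fin (p ^ k - 1), Finsupp.lmapDomain (ZMod p) (ZMod p) (fun I => (I, ν)) ∘ₗ
    contractₗ p k (linForm p k lam ^ ((ν : ℕ) + 1))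

theorem theta_apply (lam : Fin k → ZMod p) (x : (Fin k → ℕ) →₀ ZMod p) (I : Fin k → ℕ)
    (ν : Fin (p ^ k - 1)) :
    theta p k lam x (I, ν) = contract p k (linForm p k lam ^ ((ν : ℕ) + 1)) x I := by
  simp only [theta, LinearMap.sum_apply, LinearMap.comp_apply, Finsupp.lmapDomain_apply,
    Finsupp.finsetSum_apply]
  rw [sum_eq_single ν]
  · exact Finsupp.mapDomain_apply (fun _ _ h => (Prod.mk.inj h).1) _ I
  · intro ν' _ hν'
    refine Finsupp.mapDomain_of_notMem_range _ _ ?_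
    rintro ⟨_, h⟩
    exact hν' (Prod.mk.inj h).2
  · simp

theorem dualSeries_comp_theta
    (φ : Module.Dual (ZMod p) (((Fin k → ℕ) × Fin (p ^ k - 1)) →₀ ZMod p)) (lam : Fin k → ZMod p) :
    dualSeries p k (φ ∘ₗ theta p k lam) =
      ∑ ν : Fin (p ^ k - 1),
        dualSeries p k (φ ∘ₗ Finsupp.lmapDomain (ZMod p) (ZMod p) (fun I => (I, ν))) *
          (linForm p k lam : MvPowerSeries (Fin k) (ZMod p)) ^ ((ν : ℕ) + 1) := by
  simp_rw [← MvPolynomial.coe_pow, ← dualSeries_comp_contractₗ, ← map_sum]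
  congr 1
  refine LinearMap.ext fun x => ?_
  simp [theta, LinearMap.sum_apply]

variable (p k) in
noncomputable def thetaSum [NeZero p] :
    ({lam : Fin k → ZMod p // lam ≠ 0} → (Fin k → ℕ) →₀ ZMod p) →ₗ[ZMod p]
      ((Fin k → ℕ) × Fin (p ^ k - 1)) →₀ ZMod p :=
  LinearMap.lsum (ZMod p) _ (ZMod p) fun lam => theta p k lam.1

theorem thetaSum_surjective [Fact p.Prime] : Function.Surjective (thetaSum p k) := by
  rw [← LinearMap.dualMap_injective_iff, injective_iff_map_eq_zero]
  intro φ hφ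
  set ψ : Fin (p ^ k - 1) → Module.Dual (ZMod p) ((Fin k → ℕ) →₀ ZMod p) :=
    fun ν => φ ∘ₗ Finsupp.lmapDomain (ZMod p) (ZMod p) (fun I => (I, ν))
  have hθ : ∀ lam, lam ≠ 0 → φ ∘ₗ theta p k lam = 0 := fun lam hlam => by
    refine LinearMap.ext fun x => ?_
    have h := LinearMap.congr_fun hφ (Pi.single ⟨lam, hlam⟩ x)
    rwa [LinearMap.dualMap_apply, thetaSum, LinearMap.lsum_piSingle] at h
  have hψ : dualSeries p k ∘ ψ = 0 := by
    have := NoZeroDivisors.to_isDomain (MvPowerSeries (Fin k) (ZMod p))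
    refine eq_zero_of_forall_sum_mul_pow_succ_eq_zero
      ((coe_injective _ _).comp linForm_injective) ?_ fun lam => ?_
    · simp [ZMod.card, Nat.sub_lt (pow_pos (Fact.out : p.Prime).pos k)]
    · rcases eq_or_ne lam 0 with rfl | hlam
      · simp [linForm]
      · exact (dualSeries_comp_theta φ lam).symm.trans (by rw [hθ lam hlam, map_zero])
  refine Finsupp.lhom_ext fun ⟨I, ν⟩ a => ?_
  have : ψ ν = 0 := dualSeries_injective (by simpa using congrFun hψ ν)
  simpa [ψ] using LinearMap.congr_fun this (Finsupp.single I a)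

theorem homcomp_surjective_general (p k : ℕ) [Fact p.Prime]
    (y : ((Fin k → ℕ) × Fin (p ^ k - 1)) →₀ ZMod p) :
    ∃ x : {lam : Fin k → ZMod p // lam ≠ 0} → ((Fin k → ℕ) →₀ ZMod p),
      ∀ (I : Fin k → ℕ) (ν : Fin (p ^ k - 1)),
        y (I, ν) = ∑ lam : {lam : Fin k → ZMod p // lam ≠ 0},
          contract p k (linForm p k lam.1 ^ ((ν : ℕ) + 1)) (x lam) I := by
  obtain ⟨x, rfl⟩ := thetaSum_surjective (p := p) (k := k) y
  refine ⟨x, fun I ν => ?_⟩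
  simp only [thetaSum, LinearMap.lsum_apply, LinearMap.coe_sum, Finset.sum_apply,
    LinearMap.comp_apply, LinearMap.proj_apply, Finsupp.finsetSum_apply, theta_apply]

/-- Proposition `homcomp`: the map
`⊕_{Λ ∈ Λ_k} H_*^k → H_*^k ⊗ M_k`, `(x_Λ) ↦ ∑_{Λ} Θ_Λ(x_Λ)`, is surjective, where
`Θ_Λ` in component `ν` is the contraction by `ℓ_Λ^{ν+1}`. -/
theorem homcomp_surjective (p k : ℕ) [Fact p.Prime] (hk : 1 ≤ k)
    (y : ((Fin k → ℕ) × Fin (p ^ k - 1)) →₀ ZMod p) :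
    ∃ x : {lam : Fin k → ZMod p // lam ≠ 0} → ((Fin k → ℕ) →₀ ZMod p),
      ∀ (I : Fin k → ℕ) (ν : Fin (p ^ k - 1)),
        y (I, ν) = ∑ lam : {lam : Fin k → ZMod p // lam ≠ 0},
          contract p k (linForm p k lam.1 ^ ((ν : ℕ) + 1)) (x lam) I :=
  homcomp_surjective_general p k y
end

section
/- Let p be a prime, k ≥ 1, ℓ ≥ 1, and let δ : Fin ℓ → ℕ be monotone with 1 ≤ δ j ≤ k for all j. Let Λ be the set of families (λ_j)_{j : Fin ℓ} of vectors λ_j : Fin k → ZMod p such that for each j: λ_j ≠ 0 and λ_j i = 0 whenever δ j ≤ (i : ℕ) + 1 is false, i.e. λ_j is supported in the first δ j coordinates. Then the 𝔽_p-linear map Φ : (Λ → H) → (((Fin k → ℕ) × (Π j : Fin ℓ, Fin (p^{δ j} − 1))) →₀ ZMod p), defined by Φ(x)(I, ν) = Σ_{(λ_j) ∈ Λ} (D_{∏_j ℓ_{λ_j}^{(ν j : ℕ)+1}} (x (λ_j))) I, is surjective. -/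
theorem Module.End.surjective_add_of_mul_eq_one {K M : Type*} [Semiring K] [AddCommGroup M]
    [Module K M] {A B N : Module.End K M} (hAB : A * B = 1) (hNB : Commute N B)
    (hN : ∀ y, ∃ n, (N ^ n) y = 0) : Function.Surjective ⇑(A + N) := by
  intro y
  obtain ⟨n, hn⟩ := hN y
  -- `(A + N) B = 1 + N B`, and `N B` kills `y` after `n` steps, so a geometric series inverts it.
  have hinv : (A + N) * (B * ∑ i ∈ Finset.range n, (-(N * B)) ^ i) = 1 - (-(N * B)) ^ n := by
    rw [← mul_assoc, add_mul, hAB, ← sub_neg_eq_add, mul_neg_geom_sum]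
  have hvanish : ((-(N * B)) ^ n) y = 0 := by
    rw [neg_pow, hNB.mul_pow, (hNB.pow_pow n n).eq, Module.End.mul_apply, Module.End.mul_apply,
      hn, map_zero, map_zero]
  refine ⟨(B * ∑ i ∈ Finset.range n, (-(N * B)) ^ i) y, ?_⟩
  rw [← Module.End.mul_apply, hinv, LinearMap.sub_apply, hvanish, sub_zero, Module.End.one_apply]

section DualFamily

variable {R : Type*} [CommRing R]

theorem exists_sum_pow_mul_eq_ite_of_fin (S : Submonoid R) {n : ℕ} {z : Fin n → R}
    (hz : ∀ t, z t ∈ S) (hzz : ∀ s t, s ≠ t → z s - z t ∈ S) (m₀ : Fin n) :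
    ∃ U : Fin n → R, ∃ h ∈ S,
      ∀ m : Fin n, ∑ t, z t ^ ((m : ℕ) + 1) * U t = if m = m₀ then h else 0 := by
  let M : Matrix (Fin n) (Fin n) R := Matrix.of fun m t => z t ^ ((m : ℕ) + 1)
  have hdet : M.det = (∏ t, z t) * ∏ s, ∏ t ∈ Finset.Ioi s, (z t - z s) := by
    have hMt : M.transpose = Matrix.diagonal z * Matrix.vandermonde z := by
      ext t m
      simp [M, Matrix.diagonal_mul, Matrix.vandermonde_apply, pow_succ']
    rw [← Matrix.det_transpose, hMt, Matrix.det_mul, Matrix.det_diagonal, Matrix.det_vandermonde]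
  refine ⟨M.cramer (Pi.single m₀ 1), M.det, ?_, fun m => ?_⟩
  · rw [hdet]
    exact mul_mem (prod_mem fun t _ => hz t) (prod_mem fun s _ => prod_mem fun t ht =>
      hzz t s (Finset.mem_Ioi.mp ht).ne')
  · have := congrFun (Matrix.mulVec_cramer M (Pi.single m₀ 1)) m
    simpa [Matrix.mulVec, dotProduct, M, Pi.single_apply] using this

theorem exists_sum_pow_mul_eq_ite (S : Submonoid R) {T : Type*} [Fintype T] {n : ℕ}
    (hT : Fintype.card T = n) {z : T → R} (hz : ∀ t, z t ∈ S)
    (hzz : ∀ s t, s ≠ t → z s - z t ∈ S) (m₀ : Fin n) :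
    ∃ U : T → R, ∃ h ∈ S,
      ∀ m : Fin n, ∑ t, z t ^ ((m : ℕ) + 1) * U t = if m = m₀ then h else 0 := by
  let e : Fin n ≃ T := (Fintype.equivFinOfCardEq hT).symm
  obtain ⟨U, h, hS, hU⟩ := exists_sum_pow_mul_eq_ite_of_fin S (z := z ∘ e) (fun t => hz _)
    (fun s t hst => hzz _ _ (e.injective.ne hst)) m₀
  refine ⟨U ∘ e.symm, h, hS, fun m => ?_⟩
  rw [← hU m, ← e.sum_comp]
  simp

theorem exists_sum_prod_mul_eq_ite (S : Submonoid R) {ι : Type*} [Fintype ι] [DecidableEq ι]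
    {T N : ι → Type*} [∀ j, Fintype (T j)] [∀ j, DecidableEq (N j)]
    (f : ∀ j, T j → N j → R)
    (hf : ∀ j n₀, ∃ U : T j → R, ∃ h ∈ S, ∀ n, ∑ t, f j t n * U t = if n = n₀ then h else 0)
    (ν₀ : ∀ j, N j) :
    ∃ U : (∀ j, T j) → R, ∃ h ∈ S,
      ∀ ν, ∑ t, (∏ j, f j (t j) (ν j)) * U t = if ν = ν₀ then h else 0 := by
  choose U h hS hU using fun j => hf j (ν₀ j)
  refine ⟨fun t => ∏ j, U j (t j), ∏ j, h j, prod_mem fun j _ => hS j, fun ν => ?_⟩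
  simp_rw [← Finset.prod_mul_distrib]
  rw [← Fintype.prod_sum fun j t => f j t (ν j) * U j t,
    Finset.prod_congr rfl fun j _ => hU j (ν j), Finset.prod_ite_zero]
  simp [funext_iff]

end DualFamily

theorem exists_sum_apply_eq {R K M : Type*} [Semiring R] [Semiring K] [AddCommMonoid M]
    [Module K M] (φ : R →+* Module.End K M) {Λ N : Type*} [Fintype Λ] [Fintype N]
    [DecidableEq N] (F : Λ → N → R)
    (hF : ∀ ν₀, ∃ U : Λ → R, ∃ h, Function.Surjective (φ h) ∧
      ∀ ν, ∑ t, F t ν * U t = if ν = ν₀ then h else 0)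
    (y : N → M) : ∃ x : Λ → M, ∀ ν, y ν = ∑ t, φ (F t ν) (x t) := by
  choose U h hsurj hU using hF
  choose x₀ hx₀ using fun ν₀ => hsurj ν₀ (y ν₀)
  refine ⟨fun t => ∑ ν₀, φ (U ν₀ t) (x₀ ν₀), fun ν => ?_⟩
  simp_rw [map_sum, ← Module.End.mul_apply, ← map_mul]
  rw [Finset.sum_comm]
  simp_rw [← LinearMap.sum_apply, ← map_sum, hU]
  rw [Fintype.sum_eq_single ν fun ν₀ hne => by rw [if_neg hne.symm, map_zero,
    LinearMap.zero_apply], if_pos rfl, hx₀]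

open MvPolynomial

section Contract

variable {p k : ℕ}

lemma contract_apply_of_support_subset {g : MvPolynomial (Fin k) (ZMod p)}
    {s : Finset (Fin k →₀ ℕ)} (hs : g.support ⊆ s) (x : (Fin k → ℕ) →₀ ZMod p)
    (I : Fin k → ℕ) : contract p k g x I = ∑ J ∈ s, coeff J g * x (I + J) :=
  Finset.sum_subset hs fun J _ hJ => by rw [notMem_support_iff.mp hJ, zero_mul]

lemma contract_zero_left (x : (Fin k → ℕ) →₀ ZMod p) : contract p k 0 x = 0 := by
  ext I; simp [contract]

lemma contract_add_left (g h : MvPolynomial (Fin k) (ZMod p)) (x : (Fin k → ℕ) →₀ ZMod p) :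
    contract p k (g + h) x = contract p k g x + contract p k h x := by
  ext I
  rw [Finsupp.add_apply, contract_apply_of_support_subset support_add,
    contract_apply_of_support_subset Finset.subset_union_left,
    contract_apply_of_support_subset Finset.subset_union_right, ← Finset.sum_add_distrib]
  simp only [coeff_add, add_mul]

lemma contract_add_right (g : MvPolynomial (Fin k) (ZMod p)) (x y : (Fin k → ℕ) →₀ ZMod p) :
    contract p k g (x + y) = contract p k g x + contract p k g y := by
  ext I
  simp only [contract, Finsupp.onFinset_apply, Finsupp.add_apply, mul_add,
    Finset.sum_add_distrib]

lemma contract_monomial (J : Fin k →₀ ℕ) (c : ZMod p) (x : (Fin k → ℕ) →₀ ZMod p)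
    (I : Fin k → ℕ) : contract p k (monomial J c) x I = c * x (I + J) := by
  rw [contract_apply_of_support_subset support_monomial_subset, Finset.sum_singleton,
    coeff_monomial, if_pos rfl]

lemma contract_mul (g h : MvPolynomial (Fin k) (ZMod p)) (x : (Fin k → ℕ) →₀ ZMod p) :
    contract p k (g * h) x = contract p k g (contract p k h x) := by
  induction g using MvPolynomial.induction_on' with
  | add g₁ g₂ hg₁ hg₂ => rw [add_mul, contract_add_left, contract_add_left, hg₁, hg₂]
  | monomial a c =>
    induction h using MvPolynomial.induction_on' with
    | add h₁ h₂ hh₁ hh₂ =>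
      rw [mul_add, contract_add_left, hh₁, hh₂, contract_add_left, contract_add_right]
    | monomial b d =>
      ext I
      rw [monomial_mul, contract_monomial, contract_monomial, contract_monomial, mul_assoc,
        Finsupp.coe_add, add_assoc]

lemma contract_smul_right (g : MvPolynomial (Fin k) (ZMod p)) (c : ZMod p)
    (x : (Fin k → ℕ) →₀ ZMod p) : contract p k g (c • x) = c • contract p k g x := by
  ext I
  simp only [contract, Finsupp.onFinset_apply, Finsupp.smul_apply, smul_eq_mul, Finset.mul_sum,
    mul_left_comm c]

lemma contract_C (c : ZMod p) (x : (Fin k → ℕ) →₀ ZMod p) :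
    contract p k (C c) x = c • x := by
  ext I
  rw [← monomial_zero', contract_monomial, Finsupp.coe_zero, add_zero, Finsupp.smul_apply,
    smul_eq_mul]

lemma contract_one (x : (Fin k → ℕ) →₀ ZMod p) : contract p k 1 x = x := by
  rw [← C_1, contract_C, one_smul]

noncomputable def contractHom (p k : ℕ) :
    MvPolynomial (Fin k) (ZMod p) →+* Module.End (ZMod p) ((Fin k → ℕ) →₀ ZMod p) where
  toFun g := ⟨⟨contract p k g, contract_add_right g⟩, contract_smul_right g⟩
  map_one' := LinearMap.ext contract_one
  map_mul' g h := LinearMap.ext (contract_mul g h)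
  map_zero' := LinearMap.ext contract_zero_left
  map_add' g h := LinearMap.ext (contract_add_left g h)

@[simp]
lemma contractHom_apply (g : MvPolynomial (Fin k) (ZMod p)) (x : (Fin k → ℕ) →₀ ZMod p) :
    contractHom p k g x = contract p k g x :=
  rfl

def surjContractSubmonoid (p k : ℕ) : Submonoid (MvPolynomial (Fin k) (ZMod p)) where
  carrier := {g | Function.Surjective (contract p k g)}
  mul_mem' {g h} hg hh := by
    change Function.Surjective (contract p k (g * h))
    rw [show contract p k (g * h) = contract p k g ∘ contract p k h from funext (contract_mul g h)]
    exact hg.comp hh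
  one_mem' x := ⟨x, contract_one x⟩

end Contract

section LinearForm

variable {p k : ℕ}

lemma linForm_add (μ ν : Fin k → ZMod p) :
    linForm p k (μ + ν) = linForm p k μ + linForm p k ν := by
  simp only [linForm, Pi.add_apply, add_smul, Finset.sum_add_distrib]

lemma linForm_single (i : Fin k) (a : ZMod p) : linForm p k (Pi.single i a) = C a * X i := by
  simp [linForm, Pi.single_apply, smul_eq_C_mul]

lemma linForm_sub (μ ν : Fin k → ZMod p) :
    linForm p k (μ - ν) = linForm p k μ - linForm p k ν := by
  simp only [linForm, Pi.sub_apply, sub_smul, Finset.sum_sub_distrib]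

lemma isHomogeneous_linForm (μ : Fin k → ZMod p) : (linForm p k μ).IsHomogeneous 1 :=
  IsHomogeneous.sum _ _ _ fun i _ => by
    rw [smul_eq_C_mul]; exact isHomogeneous_C_mul_X _ i

lemma contract_eq_zero_of_isHomogeneous {g : MvPolynomial (Fin k) (ZMod p)} {n : ℕ}
    (hg : g.IsHomogeneous n) {x : (Fin k → ℕ) →₀ ZMod p}
    (hx : ∀ I ∈ x.support, ∑ i, I i < n) : contract p k g x = 0 := by
  ext I
  refine Finset.sum_eq_zero fun J hJ => ?_
  have hJn : ∑ i, J i = n := by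
    rw [← Finsupp.degree_eq_sum, Finsupp.degree_eq_weight_one]; exact hg (mem_support_iff.mp hJ)
  rw [Finsupp.notMem_support_iff.mp fun h => ?_, mul_zero]
  have := hx _ h
  simp only [Pi.add_apply, Finset.sum_add_distrib] at this
  omega

lemma contract_linForm_apply (μ : Fin k → ZMod p) (x : (Fin k → ℕ) →₀ ZMod p)
    (I : Fin k → ℕ) :
    contract p k (linForm p k μ) x I = ∑ j, μ j * x (I + Pi.single j 1) := by
  simp only [linForm, ← contractHom_apply, map_sum, LinearMap.sum_apply, Finsupp.finsetSum_apply]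
  simp only [contractHom_apply, smul_eq_C_mul, X, C_mul_monomial, mul_one, contract_monomial,
    Finsupp.single_eq_pi_single]

noncomputable def indexShift (i : Fin k) : Module.End (ZMod p) ((Fin k → ℕ) →₀ ZMod p) :=
  Finsupp.lmapDomain (ZMod p) (ZMod p) (· + Pi.single i 1)

lemma indexShift_apply_add_single (i : Fin k) (x : (Fin k → ℕ) →₀ ZMod p) (I : Fin k → ℕ) :
    indexShift i x (I + Pi.single i 1) = x I :=
  Finsupp.mapDomain_apply (add_left_injective _) x I

lemma indexShift_apply_of_eq_zero {i : Fin k} (x : (Fin k → ℕ) →₀ ZMod p) {I : Fin k → ℕ}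
    (hI : I i = 0) : indexShift i x I = 0 :=
  Finsupp.mapDomain_of_notMem_range x I (by rintro ⟨J, rfl⟩; simp at hI)

lemma contract_X_indexShift (i : Fin k) (x : (Fin k → ℕ) →₀ ZMod p) :
    contract p k (X i) (indexShift i x) = x := by
  ext I
  rw [X, contract_monomial, one_mul, Finsupp.single_eq_pi_single, indexShift_apply_add_single]

lemma contract_linForm_indexShift {μ : Fin k → ZMod p} {i : Fin k} (hμ : μ i = 0)
    (x : (Fin k → ℕ) →₀ ZMod p) :
    contract p k (linForm p k μ) (indexShift i x) =
      indexShift i (contract p k (linForm p k μ) x) := by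
  ext I
  by_cases hI : I i = 0
  · rw [indexShift_apply_of_eq_zero _ hI, contract_linForm_apply]
    refine Finset.sum_eq_zero fun j _ => ?_
    by_cases hj : j = i
    · rw [hj, hμ, zero_mul]
    · rw [indexShift_apply_of_eq_zero _ (by simp [hI, Ne.symm hj]), mul_zero]
  · obtain ⟨I', rfl⟩ : ∃ I', I = I' + Pi.single i 1 :=
      ⟨I - Pi.single i 1, by ext j; by_cases hj : j = i <;> simp [hj]; omega⟩
    simp only [indexShift_apply_add_single, contract_linForm_apply,
      add_right_comm I' (Pi.single i 1)]

lemma exists_pow_contract_linForm_eq_zero (μ : Fin k → ZMod p) (x : (Fin k → ℕ) →₀ ZMod p) :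
    ∃ n, contract p k (linForm p k μ ^ n) x = 0 := by
  refine ⟨x.support.sup (fun I => ∑ i, I i) + 1,
    contract_eq_zero_of_isHomogeneous ((isHomogeneous_linForm μ).pow _) fun I hI => ?_⟩
  have := Finset.le_sup (f := fun I => ∑ i, I i) hI
  omega

theorem contract_linForm_surjective [Fact p.Prime] {μ : Fin k → ZMod p} (hμ : μ ≠ 0) :
    Function.Surjective (contract p k (linForm p k μ)) := by
  obtain ⟨i, hi⟩ := Function.ne_iff.mp hμ
  set μ' := Function.update μ i 0
  have hsplit : linForm p k μ = C (μ i) * X i + linForm p k μ' := by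
    rw [← linForm_single, ← linForm_add]
    congr 1
    ext j
    by_cases hj : j = i <;> simp [μ', hj]
  have hinv : contractHom p k (C (μ i) * X i) * ((μ i)⁻¹ • indexShift i) = 1 := by
    refine LinearMap.ext fun x => ?_
    rw [Module.End.mul_apply, contractHom_apply, contract_mul, contract_C, LinearMap.smul_apply,
      contract_smul_right, contract_X_indexShift, smul_smul, mul_inv_cancel₀ hi, one_smul,
      Module.End.one_apply]
  have hcomm : Commute (contractHom p k (linForm p k μ')) ((μ i)⁻¹ • indexShift i) :=
    .smul_right (LinearMap.ext (contract_linForm_indexShift (Function.update_self i 0 μ))) _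
  have hnil (y : (Fin k → ℕ) →₀ ZMod p) : ∃ n, (contractHom p k (linForm p k μ') ^ n) y = 0 := by
    simpa only [← map_pow, contractHom_apply] using exists_pow_contract_linForm_eq_zero μ' y
  have := Module.End.surjective_add_of_mul_eq_one hinv hcomm hnil
  rwa [← map_add, ← hsplit] at this

end LinearForm

lemma card_nonzero_supported {p k c : ℕ} [NeZero p] (hck : c ≤ k) :
    Fintype.card {v : Fin k → ZMod p // v ≠ 0 ∧ ∀ i : Fin k, c ≤ (i : ℕ) → v i = 0} =
      p ^ c - 1 := by
  have hsupp : (Finset.univ.filter fun v : Fin k → ZMod p => ∀ i : Fin k, c ≤ (i : ℕ) → v i = 0)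
      = Fintype.piFinset fun i : Fin k => if c ≤ (i : ℕ) then {0} else Finset.univ := by
    ext v
    simp only [Finset.mem_filter, Finset.mem_univ, true_and, Fintype.mem_piFinset]
    refine forall_congr' fun i => ?_
    split_ifs <;> simp [*]
  rw [Fintype.card_subtype, ← Finset.filter_filter, Finset.filter_ne', Finset.filter_erase, hsupp,
    Finset.card_erase_of_mem (Fintype.mem_piFinset.mpr fun i => by split_ifs <;> simp),
    Fintype.card_piFinset]
  simp [apply_ite Finset.card, Finset.prod_ite, Fin.card_filter_val_lt, hck]

theorem homcomplarge_surjective_general (p k ℓ : ℕ) [Fact p.Prime]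
    (δ : Fin ℓ → ℕ) (hδ : ∀ j, 1 ≤ δ j ∧ δ j ≤ k)
    (y : ((Fin k → ℕ) × (∀ j : Fin ℓ, Fin (p ^ δ j - 1))) →₀ ZMod p) :
    ∃ x : {lam : Fin ℓ → Fin k → ZMod p //
        ∀ j, lam j ≠ 0 ∧ ∀ i : Fin k, δ j ≤ (i : ℕ) → lam j i = 0} →
        ((Fin k → ℕ) →₀ ZMod p),
      ∀ (I : Fin k → ℕ) (ν : ∀ j : Fin ℓ, Fin (p ^ δ j - 1)),
        y (I, ν) = ∑ lam : {lam : Fin ℓ → Fin k → ZMod p //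
            ∀ j, lam j ≠ 0 ∧ ∀ i : Fin k, δ j ≤ (i : ℕ) → lam j i = 0},
          contract p k (∏ j : Fin ℓ, linForm p k (lam.1 j) ^ ((ν j : ℕ) + 1)) (x lam) I := by
  have hfactor (j : Fin ℓ) := exists_sum_pow_mul_eq_ite (surjContractSubmonoid p k)
    (card_nonzero_supported (hδ j).2) (z := fun t => linForm p k t.1)
    (fun t => contract_linForm_surjective t.2.1)
    (fun s t hst => by
      rw [← linForm_sub]
      exact contract_linForm_surjective (sub_ne_zero.mpr (Subtype.coe_injective.ne hst)))
  refine (exists_sum_apply_eq (contractHom p k)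
    (fun lam ν => ∏ j, linForm p k (lam.1 j) ^ ((ν j : ℕ) + 1)) (fun ν₀ => ?_)
    fun ν => y.comapDomain (·, ν) (Prod.mk_left_injective ν).injOn).imp
    fun x hx I ν => by simpa using DFunLike.congr_fun (hx ν) I
  obtain ⟨U, h, hS, hU⟩ := exists_sum_prod_mul_eq_ite _ _ hfactor ν₀
  exact ⟨fun lam => U (Equiv.subtypePiEquivPi lam), h, hS, fun ν => by
    rw [← hU ν, ← Equiv.sum_comp Equiv.subtypePiEquivPi]; rfl⟩

/-- The homological statement inside Proposition `homcomplarge`: for monotone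
`δ : Fin ℓ → ℕ` with `1 ≤ δ j ≤ k`, and `Λ` the set of families `(λ_j)` of nonzero
vectors with `λ_j` supported in the first `δ j` coordinates, the map
`⊕_{Λ} H_*^k → H_*^k ⊗ M_{δ_1} ⊗ ⋯ ⊗ M_{δ_ℓ}`,
`(x_Λ) ↦ ∑_Λ Θ_Λ(x_Λ)` (with `Θ_Λ` in multi-component `ν` the contraction by
`∏_j ℓ_{λ_j}^{(ν j)+1}`), is surjective. -/
theorem homcomplarge_surjective (p k ℓ : ℕ) [Fact p.Prime] (hk : 1 ≤ k) (hℓ : 1 ≤ ℓ)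
    (δ : Fin ℓ → ℕ) (hδmono : Monotone δ) (hδ : ∀ j, 1 ≤ δ j ∧ δ j ≤ k)
    (y : ((Fin k → ℕ) × (∀ j : Fin ℓ, Fin (p ^ δ j - 1))) →₀ ZMod p) :
    ∃ x : {lam : Fin ℓ → Fin k → ZMod p //
        ∀ j, lam j ≠ 0 ∧ ∀ i : Fin k, δ j ≤ (i : ℕ) → lam j i = 0} →
        ((Fin k → ℕ) →₀ ZMod p),
      ∀ (I : Fin k → ℕ) (ν : ∀ j : Fin ℓ, Fin (p ^ δ j - 1)),
        y (I, ν) = ∑ lam : {lam : Fin ℓ → Fin k → ZMod p //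
            ∀ j, lam j ≠ 0 ∧ ∀ i : Fin k, δ j ≤ (i : ℕ) → lam j i = 0},
          contract p k (∏ j : Fin ℓ, linForm p k (lam.1 j) ^ ((ν j : ℕ) + 1)) (x lam) I :=
  homcomplarge_surjective_general p k ℓ δ hδ y
end

section
/- Let p be an odd prime and r ≥ 3 a natural number. For k ≥ 1 and d ∈ ℕ let S_k(d) denote the (finite) number of pairs (m, ν) with m : Fin (r−1) → ℕ and ν ∈ ℕ satisfying 1 ≤ ν, ν ≤ p^k − 1, and Σ_i (2 * m i + 1) + 2 * ν = d. Then there exists D ∈ ℕ such that for all d ≥ D with d ≡ r − 1 (mod 2), one has (r − 1) * S_1(d) < S_{r−1}(d). -/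
/-!
Write `n = r - 1` and `d = 2t + n`. Sorting the pairs `(m, ν)` by `ν`, and counting the tuples
`m` with `∑ mᵢ = t - ν` by stars and bars, gives `S_k(d) = ∑_{ν=1}^{p^k-1} f (t - ν)` with
`f s = (s + n - 1).choose (n - 1)`. Since `f` is monotone, `n · S_1(d) ≤ n (p - 1) f (t - 1)` and
`(p^n - 1) f (t - p^n + 1) ≤ S_n(d)`. The two values of `f` are polynomials in `t` of the same
degree and leading coefficient, so their ratio tends to `1`, and Bernoulli's inequality gives
`n (p - 1) < p^n - 1`.
-/

/-- `dimCount p r k d` is the number of pairs `(m, ν)` with `m : Fin (r-1) → ℕ` and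
`ν : ℕ` satisfying `1 ≤ ν ≤ p^k - 1` and `∑ i (2 m_i + 1) + 2 ν = d`; this is the
`𝔽_p`-dimension in degree `d` of `H_*^{r-1} ⊗ M_k`. -/
noncomputable def dimCount (p r k d : ℕ) : ℕ :=
  Nat.card {q : (Fin (r - 1) → ℕ) × ℕ //
    1 ≤ q.2 ∧ q.2 ≤ p ^ k - 1 ∧ (∑ i, (2 * q.1 i + 1)) + 2 * q.2 = d}

open Finset Filter

instance finite_fin_sum_eq (n s : ℕ) : Finite {m : Fin n → ℕ // ∑ i, m i = s} :=
  .of_equiv _ (Sym.equivNatSumOfFintype (Fin n) s)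

theorem Nat.card_fin_succ_sum_eq (j s : ℕ) :
    Nat.card {m : Fin (j + 1) → ℕ // ∑ i, m i = s} = (s + j).choose j := by
  rw [← Nat.card_congr (Sym.equivNatSumOfFintype (Fin (j + 1)) s), Sym.natCard_sym_eq_choose,
    Nat.card_eq_fintype_card, Fintype.card_fin, add_right_comm, add_tsub_cancel_right, add_comm,
    Nat.choose_symm_add]

theorem sum_two_mul_add_one {ι : Type*} (s : Finset ι) (m : ι → ℕ) :
    ∑ i ∈ s, (2 * m i + 1) = 2 * ∑ i ∈ s, m i + #s := by
  rw [sum_add_distrib, ← mul_sum, card_eq_sum_ones]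

theorem card_sum_odd_add_even_eq_sum (n B t : ℕ) (hB : B ≤ t) :
    Nat.card {q : (Fin n → ℕ) × ℕ //
      1 ≤ q.2 ∧ q.2 ≤ B ∧ ∑ i, (2 * q.1 i + 1) + 2 * q.2 = 2 * t + n}
      = ∑ ν ∈ Icc 1 B, Nat.card {m : Fin n → ℕ // ∑ i, m i = t - ν} := by
  have hsum (m : Fin n → ℕ) : ∑ i, (2 * m i + 1) = 2 * ∑ i, m i + n := by
    rw [sum_two_mul_add_one, card_univ, Fintype.card_fin]
  let e : {q : (Fin n → ℕ) × ℕ //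
      1 ≤ q.2 ∧ q.2 ≤ B ∧ ∑ i, (2 * q.1 i + 1) + 2 * q.2 = 2 * t + n}
      ≃ Σ ν : Icc 1 B, {m : Fin n → ℕ // ∑ i, m i = t - ν} :=
    { toFun q := ⟨⟨q.1.2, mem_Icc.2 ⟨q.2.1, q.2.2.1⟩⟩, q.1.1, by
        obtain ⟨⟨m, ν⟩, -, hν, hd⟩ := q
        change ∑ i, (2 * m i + 1) + 2 * ν = 2 * t + n at hd
        change ∑ i, m i = t - ν
        rw [hsum] at hd
        omega⟩
      invFun x := ⟨(x.2.1, x.1.1), by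
        obtain ⟨⟨ν, hν⟩, m, hm⟩ := x
        obtain ⟨hν1, hνB⟩ := mem_Icc.1 hν
        change ∑ i, m i = t - ν at hm
        refine ⟨hν1, hνB, ?_⟩
        change ∑ i, (2 * m i + 1) + 2 * ν = 2 * t + n
        rw [hsum]
        omega⟩
      left_inv _ := rfl
      right_inv _ := rfl }
  rw [Nat.card_congr e, Nat.card_sigma,
    sum_coe_sort (Icc 1 B) fun ν => Nat.card {m : Fin n → ℕ // ∑ i, m i = t - ν}]

theorem sum_Icc_one_le_mul {g : ℕ → ℕ} (hg : Antitone g) (B : ℕ) :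
    ∑ ν ∈ Icc 1 B, g ν ≤ B * g 1 := by
  simpa using sum_le_card_nsmul (Icc 1 B) g (g 1) fun ν hν => hg (mem_Icc.1 hν).1

theorem mul_le_sum_Icc_one {g : ℕ → ℕ} (hg : Antitone g) (B : ℕ) :
    B * g B ≤ ∑ ν ∈ Icc 1 B, g ν := by
  simpa using card_nsmul_le_sum (Icc 1 B) g (g B) fun ν hν => hg (mem_Icc.1 hν).2

theorem mul_sub_one_lt_pow_sub_one {p n : ℕ} (hp : 2 ≤ p) (hn : 2 ≤ n) :
    n * (p - 1) < p ^ n - 1 := by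
  obtain ⟨k, rfl⟩ : ∃ k, n = k + 1 := ⟨n - 1, by omega⟩
  have hbern : 1 + k * ((p : ℤ) - 1) ≤ (p : ℤ) ^ k := one_add_mul_sub_le_pow (by omega) k
  have hk : (1 : ℤ) ≤ k := by exact_mod_cast (by omega : 1 ≤ k)
  have hp' : (2 : ℤ) ≤ p := by exact_mod_cast hp
  zify [Nat.one_le_pow _ _ (by omega : 0 < p), (by omega : 1 ≤ p)]
  rw [pow_succ]
  nlinarith [mul_le_mul_of_nonneg_right hbern (by omega : (0 : ℤ) ≤ p),
    mul_le_mul hk (by linarith : (1 : ℤ) ≤ p - 1) zero_le_one (by linarith)]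

theorem eventually_mul_add_pow_lt {a b : ℕ} (hab : a < b) (E j : ℕ) :
    ∀ᶠ u : ℕ in atTop, a * (u + E) ^ j < b * u ^ j := by
  have hlim : Tendsto (fun u : ℕ => (a : ℝ) * (1 + E / u) ^ j) atTop (nhds a) := by
    simpa using (((tendsto_const_div_atTop_nhds_zero_nat (E : ℝ)).const_add 1).pow j).const_mul
      (a : ℝ)
  filter_upwards [hlim.eventually (gt_mem_nhds (Nat.cast_lt.2 hab)), eventually_gt_atTop 0]
    with u hu hu0
  have hu0' : (0 : ℝ) < u := Nat.cast_pos.2 hu0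
  have : (a : ℝ) * (u + E) ^ j < b * u ^ j :=
    calc (a : ℝ) * (u + E) ^ j = a * (1 + E / u) ^ j * u ^ j := by
          rw [mul_assoc, ← mul_pow, add_mul, div_mul_cancel₀ _ hu0'.ne', one_mul]
      _ < b * u ^ j := mul_lt_mul_of_pos_right hu (pow_pos hu0' j)
  exact_mod_cast this

theorem eventually_mul_choose_add_lt {a b : ℕ} (hab : a < b) (c j : ℕ) :
    ∀ᶠ s : ℕ in atTop, a * (s + c).choose j < b * s.choose j := by
  filter_upwards [(tendsto_sub_atTop_nat j).eventually (eventually_mul_add_pow_lt hab (c + j) j)]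
    with s hs
  refine Nat.lt_of_mul_lt_mul_left (a := j.factorial) ?_
  calc j.factorial * (a * (s + c).choose j) = a * (s + c).descFactorial j := by
        rw [Nat.descFactorial_eq_factorial_mul_choose]; ring
    _ ≤ a * (s - j + (c + j)) ^ j := Nat.mul_le_mul_left a
        ((Nat.descFactorial_le_pow _ _).trans (Nat.pow_le_pow_left (by omega) j))
    _ < b * (s - j) ^ j := hs
    _ ≤ b * s.descFactorial j := Nat.mul_le_mul_left b
        ((Nat.pow_le_pow_left (by omega) j).trans (Nat.pow_sub_le_descFactorial s j))
    _ = j.factorial * (b * s.choose j) := by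
        rw [Nat.descFactorial_eq_factorial_mul_choose]; ring

theorem exists_forall_modEq_two_of_eventually {P : ℕ → Prop} {n : ℕ}
    (h : ∀ᶠ t in atTop, P (2 * t + n)) : ∃ D, ∀ d, D ≤ d → d ≡ n [MOD 2] → P d := by
  obtain ⟨T, hT⟩ := eventually_atTop.1 h
  refine ⟨2 * T + n, fun d hd hmod => ?_⟩
  have hmod : d % 2 = n % 2 := hmod
  obtain ⟨t, rfl⟩ : ∃ t, d = 2 * t + n := ⟨(d - n) / 2, by omega⟩
  exact hT t (by omega)

theorem dimCount_lt_general (p r : ℕ) (hp : p.Prime) (hr : 3 ≤ r) :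
    ∃ D : ℕ, ∀ d : ℕ, D ≤ d → d ≡ r - 1 [MOD 2] →
      (r - 1) * dimCount p r 1 d < dimCount p r (r - 1) d := by
  obtain ⟨j, hj⟩ : ∃ j, r - 1 = j + 1 := ⟨r - 2, by omega⟩
  set f : ℕ → ℕ := fun s => (s + j).choose j
  have hcount (k t : ℕ) (hk : p ^ k - 1 ≤ t) :
      dimCount p r k (2 * t + (r - 1)) = ∑ ν ∈ Icc 1 (p ^ k - 1), f (t - ν) := by
    rw [dimCount, card_sum_odd_add_even_eq_sum _ _ _ hk, hj]
    simp only [Nat.card_fin_succ_sum_eq, f]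
  set L := p ^ (r - 1) - 1
  have hpL : p - 1 ≤ L := Nat.sub_le_sub_right (Nat.le_self_pow (by omega) p) 1
  have hab : (r - 1) * (p - 1) < L := mul_sub_one_lt_pow_sub_one hp.two_le (by omega)
  have hasymp : ∀ᶠ t in atTop,
      (r - 1) * (p - 1) * (t - L + j + (L - 1)).choose j < L * (t - L + j).choose j :=
    ((tendsto_add_atTop_nat j).comp (tendsto_sub_atTop_nat L)).eventually
      (eventually_mul_choose_add_lt hab (L - 1) j)
  refine exists_forall_modEq_two_of_eventually ?_
  filter_upwards [hasymp, eventually_ge_atTop L] with t ht htL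
  have hf : Antitone fun ν => f (t - ν) := fun ν ν' h => Nat.choose_le_choose j (by omega)
  calc (r - 1) * dimCount p r 1 (2 * t + (r - 1))
      = (r - 1) * ∑ ν ∈ Icc 1 (p - 1), f (t - ν) := by rw [hcount 1 t (by rw [pow_one]; omega), pow_one]
    _ ≤ (r - 1) * ((p - 1) * f (t - 1)) := by gcongr; exact sum_Icc_one_le_mul hf _
    _ < L * f (t - L) := by
        rw [← mul_assoc]
        convert ht using 3
        omega
    _ ≤ ∑ ν ∈ Icc 1 L, f (t - ν) := mul_le_sum_Icc_one hf L
    _ = dimCount p r (r - 1) (2 * t + (r - 1)) := (hcount _ t htL).symm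

/-- The counting argument of Section 6: for `p` an odd prime and `r ≥ 3`, in all
sufficiently large degrees `d ≡ r - 1 (mod 2)` one has
`(r-1) · dim (H_*^{r-1} ⊗ M_1)_d < dim (H_*^{r-1} ⊗ M_{r-1})_d`. -/
theorem dimCount_lt (p r : ℕ) (hp : p.Prime) (hodd : Odd p) (hr : 3 ≤ r) :
    ∃ D : ℕ, ∀ d : ℕ, D ≤ d → d ≡ r - 1 [MOD 2] →
      (r - 1) * dimCount p r 1 d < dimCount p r (r - 1) d :=
  dimCount_lt_general p r hp hr
end
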